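/- Let V be a 3-dimensional vector space over k and let φ : V → V be an additive map satisfying φ(c·v) = c^p·φ(v) for all c ∈ k and v ∈ V (i.e. φ is semilinear with respect to the Frobenius endomorphism of k). Then there exists a basis (x, y, z) of V such that the triple (φ(x), φ(y), φ(z)) is one of the following seven: (y, z, 0), (0, z, 0), (0, 0, 0), (0, 0, z), (y, 0, z), (0, y, z), (x, y, z). -/

import Mathlib

open Module Function Polynomial

section Helpers

variable {p : ℕ} [Fact p.Prime] {k : Type} [Field k] [IsAlgClosed k] [CharP k p]

noncomputable local instance frobSurj : RingHomSurjective (frobenius k p) :=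
  ⟨(frobeniusEquiv k p).surjective⟩

lemma zero_of_add_eq_zero_of_disjoint {V : Type} [AddCommGroup V] [Module k V]
    {N S : Submodule k V} (h : N ⊓ S = ⊥) {a b : V} (ha : a ∈ N) (hb : b ∈ S)
    (hab : a + b = 0) : a = 0 ∧ b = 0 := by
  have haS : a ∈ S := by
    have h1 : a = -b := eq_neg_of_add_eq_zero_left hab
    rw [h1]; exact S.neg_mem hb
  have ha0 : a = 0 := by
    have : a ∈ N ⊓ S := ⟨ha, haS⟩
    rw [h] at this
    simpa using this
  exact ⟨ha0, by rwa [ha0, zero_add] at hab⟩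

lemma li_triple {V : Type} [AddCommGroup V] [Module k V] {x y z : V}
    (h : ∀ a b c : k, a • x + b • y + c • z = 0 → a = 0 ∧ b = 0 ∧ c = 0) :
    LinearIndependent k ![x, y, z] := by
  rw [Fintype.linearIndependent_iff]
  intro g hg
  have := h (g 0) (g 1) (g 2) (by simpa [Fin.sum_univ_three] using hg)
  intro i
  fin_cases i <;> tauto

lemma exists_fixed_vector {W : Type} [AddCommGroup W] [Module k W] [FiniteDimensional k W]
    [Nontrivial W] (f : W →ₛₗ[frobenius k p] W) (hinj : Function.Injective f) :
    ∃ v : W, v ≠ 0 ∧ f v = v := by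
  classical
  obtain ⟨w, hw⟩ := exists_ne (0 : W)
  have hp2 : 2 ≤ p := (Fact.out : p.Prime).two_le
  set G : ℕ → W := fun j => (⇑f)^[j] w with hGdef
  have hGsucc : ∀ j, G (j + 1) = f (G j) := fun j => Function.iterate_succ_apply' (⇑f) j w
  have hsm : ∀ (c : k) (v : W), f (c • v) = c ^ p • f v := fun c v => by
    rw [map_smulₛₗ]; rfl
  -- the "snoc" description of initial segments of G
  have hsnoc : ∀ j : ℕ, (fun i : Fin (j + 1) => G i.val) =
      Fin.snoc (fun i : Fin j => G i.val) (G j) := by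
    intro j; funext i
    refine Fin.lastCases ?_ (fun i => ?_) i
    · simp [Fin.snoc_last]
    · simp [Fin.snoc_castSucc]
  have hex : ∃ j, ¬ LinearIndependent k (fun i : Fin j => G i.val) := by
    refine ⟨finrank k W + 1, fun hli => ?_⟩
    have := hli.fintype_card_le_finrank
    simp at this
  obtain ⟨m, hN⟩ : ∃ m, Nat.find hex = m + 1 := by
    rcases h : Nat.find hex with _ | m
    · exfalso
      have := Nat.find_spec hex
      rw [h] at this
      exact this linearIndependent_empty_type
    · exact ⟨m, rfl⟩
  have hNdep : ¬ LinearIndependent k (fun i : Fin (m + 1) => G i.val) := by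
    have := Nat.find_spec hex
    rwa [hN] at this
  have hmin : ∀ j, j < m + 1 → LinearIndependent k (fun i : Fin j => G i.val) := fun j hj =>
    not_not.mp (Nat.find_min hex (hN ▸ hj))
  have hliM : LinearIndependent k (fun i : Fin m => G i.val) := hmin m (Nat.lt_succ_self m)
  have hmemspan : G m ∈ Submodule.span k (Set.range fun i : Fin m => G i.val) := by
    by_contra hmem
    exact hNdep (by rw [hsnoc m, linearIndependent_fin_snoc]; exact ⟨hliM, hmem⟩)
  obtain ⟨a, ha⟩ := (Submodule.mem_span_range_iff_exists_fun k).mp hmemspan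
  obtain ⟨m', rfl⟩ : ∃ m', m = m' + 1 := by
    rcases m with _ | m'
    · exfalso
      have h0 : G 0 ∈ Submodule.span k (Set.range fun i : Fin 0 => G i.val) := hmemspan
      rw [Set.range_eq_empty, Submodule.span_empty, Submodule.mem_bot] at h0
      exact hw h0
    · exact ⟨m', rfl⟩
  -- a 0 ≠ 0
  have ha0 : a 0 ≠ 0 := by
    intro h0
    have h1 : G (m' + 1) = ∑ i : Fin m', a i.succ • G (i.val + 1) := by
      rw [← ha, Fin.sum_univ_succ, h0, zero_smul, zero_add]
      refine Finset.sum_congr rfl fun i _ => ?_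
      simp [Fin.val_succ]
    set b : Fin m' → k := fun i => (frobeniusEquiv k p).symm (a i.succ) with hb
    have hbp : ∀ i, (b i) ^ p = a i.succ := fun i =>
      frobenius_apply_frobeniusEquiv_symm k p (a i.succ)
    have h2 : f (∑ i : Fin m', b i • G i.val) = ∑ i : Fin m', a i.succ • G (i.val + 1) := by
      rw [map_sum]
      refine Finset.sum_congr rfl fun i _ => ?_
      rw [hsm, hbp, ← hGsucc]
    have h3 : f (G m') = f (∑ i : Fin m', b i • G i.val) := by
      rw [h2, ← h1, ← hGsucc]
    have h4 : G m' = ∑ i : Fin m', b i • G i.val := hinj h3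
    have h5 : G m' ∈ Submodule.span k (Set.range fun i : Fin m' => G i.val) := by
      rw [h4]
      exact Submodule.sum_mem _ fun i _ =>
        Submodule.smul_mem _ _ (Submodule.subset_span ⟨i, rfl⟩)
    have h6 := hliM
    rw [hsnoc m', linearIndependent_fin_snoc] at h6
    exact h6.2 h5
  -- polynomial system
  set A : ℕ → k := fun i => if h : i < m' + 1 then a ⟨i, h⟩ else 0 with hA
  set Q : ℕ → Polynomial k :=
    fun i => Nat.rec (C (A 0) * X ^ p) (fun i Qi => Qi ^ p + C (A (i + 1)) * X ^ p) i with hQ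
  have hQ0 : Q 0 = C (A 0) * X ^ p := rfl
  have hQs : ∀ i, Q (i + 1) = (Q i) ^ p + C (A (i + 1)) * X ^ p := fun i => rfl
  have hA0 : A 0 = a 0 := by simp [hA]
  have hAval : ∀ i : Fin (m' + 1), A i.val = a i := fun i => by simp only [hA, dif_pos i.isLt]
  have hdeg : ∀ i, (Q i).natDegree = p ^ (i + 1) := by
    intro i; induction i with
    | zero => rw [hQ0, natDegree_C_mul_X_pow p _ (by rwa [hA0]), pow_one]
    | succ i ih =>
      rw [hQs]
      have hne : Q i ≠ 0 := by
        intro h; rw [h, natDegree_zero] at ih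
        exact absurd ih.symm (by positivity)
      have hlt : (C (A (i + 1)) * X ^ p).natDegree < ((Q i) ^ p).natDegree := by
        rw [natDegree_pow, ih]
        calc (C (A (i + 1)) * X ^ p).natDegree ≤ p := by
              refine le_trans (natDegree_mul_le) ?_
              simp
          _ < p * p ^ (i + 1) := by
              have h1 : 1 < p ^ (i + 1) := Nat.one_lt_pow (by omega) (by omega)
              nlinarith
      rw [natDegree_add_eq_left_of_natDegree_lt hlt, natDegree_pow, ih]
      ring
  have hdvd : ∀ i, (X : Polynomial k) ^ p ∣ Q i := by
    intro i; induction i with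
    | zero => rw [hQ0]; exact dvd_mul_left _ _
    | succ i ih =>
      rw [hQs]
      exact dvd_add (ih.trans (dvd_pow_self (Q i) (by omega))) (dvd_mul_left _ _)
  obtain ⟨B, hB⟩ := hdvd m'
  set D : Polynomial k := X ^ (p - 1) * B with hD
  have hQD : Q m' = X * D := by
    rw [hB, hD, ← mul_assoc, ← pow_succ']
    congr 2
    omega
  have hQne : Q m' ≠ 0 := by
    intro h
    have h2 := hdeg m'
    rw [h, natDegree_zero] at h2
    have h3 := pow_pos (show 0 < p by omega) (m' + 1)
    omega
  have hDne : D ≠ 0 := by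
    intro h; rw [h, mul_zero] at hQD; exact hQne hQD
  have hDdeg : 1 ≤ D.natDegree := by
    have h1 : (Q m').natDegree = 1 + D.natDegree := by
      rw [hQD, natDegree_mul X_ne_zero hDne, natDegree_X]
    have h2 := hdeg m'
    have h3 : 2 ≤ p ^ (m' + 1) := le_trans hp2 (Nat.le_self_pow (by omega) p)
    omega
  have hD0 : D.eval 0 = 0 := by
    rw [hD, eval_mul, eval_pow, eval_X, zero_pow (by omega : p - 1 ≠ 0), zero_mul]
  obtain ⟨t, ht⟩ := IsAlgClosed.exists_root (D - C 1) (by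
    have h1 : 0 < (D - C 1).natDegree := by rwa [natDegree_sub_C]
    exact (natDegree_pos_iff_degree_pos.mp h1).ne')
  have htD : D.eval t = 1 := by
    have := ht
    rw [IsRoot, eval_sub, eval_C, sub_eq_zero] at this
    exact this
  have ht0 : t ≠ 0 := by
    rintro rfl
    rw [hD0] at htD
    exact zero_ne_one htD
  have hQt : (Q m').eval t = t := by rw [hQD, eval_mul, eval_X, htD, mul_one]
  set c : Fin (m' + 1) → k := fun i => (Q i.val).eval t with hc
  have hclast : c (Fin.last m') = t := by
    show (Q (Fin.last m').val).eval t = t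
    rw [Fin.val_last]; exact hQt
  set v : W := ∑ i : Fin (m' + 1), c i • G i.val with hv
  have hvne : v ≠ 0 := by
    intro h0
    have := Fintype.linearIndependent_iff.mp hliM c (by rw [← hv, h0]) (Fin.last m')
    rw [hclast] at this
    exact ht0 this
  refine ⟨v, hvne, ?_⟩
  -- recursion facts for c
  have hc0 : c 0 = a 0 * t ^ p := by
    show (Q 0).eval t = a 0 * t ^ p
    rw [hQ0, eval_mul, eval_C, eval_pow, eval_X, hA0]
  have hcsucc : ∀ i : Fin m', c i.succ = (c i.castSucc) ^ p + a i.succ * t ^ p := by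
    intro i
    show (Q (i.val + 1)).eval t = ((Q i.val).eval t) ^ p + a i.succ * t ^ p
    rw [hQs, eval_add, eval_pow, eval_mul, eval_C, eval_pow, eval_X]
    congr 2
    have : A (i.val + 1) = a i.succ := hAval i.succ
    exact this
  -- compute f v
  have hstep : f v = ∑ i : Fin (m' + 1), (c i) ^ p • G (i.val + 1) := by
    rw [hv, map_sum]
    refine Finset.sum_congr rfl fun i _ => ?_
    rw [hsm, ← hGsucc]
  rw [hstep, Fin.sum_univ_castSucc]
  have hlast : (c (Fin.last m')) ^ p • G (m' + 1) =
      ∑ j : Fin (m' + 1), (t ^ p * a j) • G j.val := by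
    rw [hclast, ← ha, Finset.smul_sum]
    refine Finset.sum_congr rfl fun j _ => ?_
    rw [smul_smul]
  rw [show G ((Fin.last m').val + 1) = G (m' + 1) by rw [Fin.val_last]]
  rw [hlast, Fin.sum_univ_succ (f := fun j : Fin (m' + 1) => (t ^ p * a j) • G j.val)]
  -- RHS : v
  rw [hv, Fin.sum_univ_succ (f := fun i : Fin (m' + 1) => c i • G i.val)]
  have hfirst : (t ^ p * a 0) • G (0 : Fin (m' + 1)).val = c 0 • G 0 := by
    rw [hc0, mul_comm]
    simp
  have hcomb : ∀ i : Fin m',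
      (c i.castSucc) ^ p • G (i.castSucc.val + 1) + (t ^ p * a i.succ) • G i.succ.val
        = c i.succ • G i.succ.val := by
    intro i
    have h1 : i.succ.val = i.castSucc.val + 1 := by simp [Fin.val_succ]
    rw [h1, ← add_smul, hcsucc i]
    congr 1
    ring
  calc ∑ i : Fin m', (c i.castSucc) ^ p • G (i.castSucc.val + 1) +
        ((t ^ p * a 0) • G (0 : Fin (m' + 1)).val +
          ∑ i : Fin m', (t ^ p * a i.succ) • G i.succ.val)
      = c 0 • G 0 + ∑ i : Fin m', ((c i.castSucc) ^ p • G (i.castSucc.val + 1) +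
          (t ^ p * a i.succ) • G i.succ.val) := by
        rw [hfirst, Finset.sum_add_distrib]
        abel
    _ = c 0 • G 0 + ∑ i : Fin m', c i.succ • G i.succ.val := by
        rw [Finset.sum_congr rfl fun i _ => hcomb i]
    _ = c 0 • G (0 : Fin (m' + 1)).val + ∑ i : Fin m', c i.succ • G i.succ.val := rfl

lemma exists_fixed_basis :
    ∀ (n : ℕ) (W : Type) [AddCommGroup W] [Module k W] [FiniteDimensional k W]
      (f : W →ₛₗ[frobenius k p] W), Function.Bijective f → Module.finrank k W = n →
      ∃ b : Basis (Fin n) k W, ∀ i, f (b i) = b i := by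
  intro n
  induction n with
  | zero =>
    intro W _ _ _ f _ hdim
    have : Subsingleton W := finrank_zero_iff.mp hdim
    exact ⟨Basis.empty W, fun i => i.elim0⟩
  | succ n ih =>
    intro W _ _ _ f hf hdim
    have hnt : Nontrivial W := by
      refine Module.nontrivial_of_finrank_pos (R := k) ?_
      omega
    obtain ⟨x, hx0, hfx⟩ := exists_fixed_vector f hf.injective
    set L := Submodule.span k {x} with hL
    have hLle : L ≤ L.comap f := by
      rw [hL, Submodule.span_le]
      rintro y hy
      rw [Set.mem_singleton_iff] at hy
      subst hy
      show f y ∈ L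
      rw [hfx]
      exact Submodule.mem_span_singleton_self y
    set f' := Submodule.mapQ L L f hLle with hf'
    have hdim' : finrank k (W ⧸ L) = n := by
      have h1 : finrank k L = 1 := finrank_span_singleton hx0
      have h2 := Submodule.finrank_quotient_add_finrank L
      omega
    have happ : ∀ y : W, f' (Submodule.Quotient.mk y) = Submodule.Quotient.mk (f y) :=
      fun y => rfl
    have hsurj' : Function.Surjective f' := by
      intro y
      obtain ⟨z, rfl⟩ := Submodule.Quotient.mk_surjective L y
      obtain ⟨u, rfl⟩ := hf.surjective z
      exact ⟨Submodule.Quotient.mk u, happ u⟩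
    have hinj' : Function.Injective f' := by
      rw [injective_iff_map_eq_zero]
      intro y hy
      obtain ⟨z, rfl⟩ := Submodule.Quotient.mk_surjective L y
      rw [happ, Submodule.Quotient.mk_eq_zero] at hy
      obtain ⟨c, hc⟩ := Submodule.mem_span_singleton.mp hy
      have hcx : f ((frobeniusEquiv k p).symm c • x) = f z := by
        rw [map_smulₛₗ, hfx]
        rw [show (frobenius k p) ((frobeniusEquiv k p).symm c) = c from
          frobenius_apply_frobeniusEquiv_symm k p c]
        exact hc
      have hz : z = (frobeniusEquiv k p).symm c • x := (hf.injective hcx).symm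
      rw [Submodule.Quotient.mk_eq_zero, hz]
      exact Submodule.smul_mem _ _ (Submodule.mem_span_singleton_self x)
    obtain ⟨b', hb'⟩ := ih (W ⧸ L) f' ⟨hinj', hsurj'⟩ hdim'
    choose u hu using fun i => Submodule.Quotient.mk_surjective L (b' i)
    have hmem : ∀ i, f (u i) - u i ∈ L := by
      intro i
      rw [← Submodule.Quotient.mk_eq_zero]
      have h1 : (Submodule.Quotient.mk (f (u i) - u i) : W ⧸ L)
          = f' (b' i) - b' i := by
        rw [Submodule.Quotient.mk_sub, ← hu i, happ]
      rw [h1, hb' i, sub_self]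
    choose e he using fun i => Submodule.mem_span_singleton.mp (hmem i)
    have hsolve : ∀ i, ∃ s : k, s ^ p - s + e i = 0 := by
      intro i
      have hdegp : ((X : Polynomial k) ^ p - X + C (e i)).natDegree = p := by
        have hp2 : 2 ≤ p := (Fact.out : p.Prime).two_le
        have h1 : ((X : Polynomial k) ^ p - X).natDegree = p := by
          rw [natDegree_sub_eq_left_of_natDegree_lt] <;> simp [natDegree_X_pow]
          omega
        rw [natDegree_add_C, h1]
      obtain ⟨s, hs⟩ := IsAlgClosed.exists_root ((X : Polynomial k) ^ p - X + C (e i)) (by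
        have hp2 : 2 ≤ p := (Fact.out : p.Prime).two_le
        have : 0 < ((X : Polynomial k) ^ p - X + C (e i)).natDegree := by omega
        exact (natDegree_pos_iff_degree_pos.mp this).ne')
      refine ⟨s, ?_⟩
      have := hs
      rw [IsRoot, eval_add, eval_sub, eval_pow, eval_X, eval_C] at this
      exact this
    choose s hs using hsolve
    set v : Fin n → W := fun i => u i + s i • x with hvdef
    have hfv : ∀ i, f (v i) = v i := by
      intro i
      show f (u i + s i • x) = u i + s i • x
      rw [map_add, map_smulₛₗ, hfx]
      have hfu : f (u i) = u i + e i • x := by rw [he i]; abel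
      rw [hfu]
      have hco : e i + (s i) ^ p = s i := by
        have := hs i
        linear_combination this
      calc u i + e i • x + (frobenius k p) (s i) • x
          = u i + (e i + (s i) ^ p) • x := by
            rw [add_smul]
            rw [show (frobenius k p) (s i) = (s i) ^ p from rfl]
            abel
        _ = u i + s i • x := by rw [hco]
    have hmkx : (Submodule.Quotient.mk x : W ⧸ L) = 0 :=
      (Submodule.Quotient.mk_eq_zero _).mpr (Submodule.mem_span_singleton_self x)
    have hmk : ∀ i, (Submodule.Quotient.mk (v i) : W ⧸ L) = b' i := by
      intro i
      show (Submodule.Quotient.mk (u i + s i • x) : W ⧸ L) = b' i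
      rw [Submodule.Quotient.mk_add, Submodule.Quotient.mk_smul, hmkx, smul_zero,
        add_zero, hu i]
    set Bfam : Fin (n + 1) → W := Fin.cons x v with hBfam
    have hli : LinearIndependent k Bfam := by
      rw [Fintype.linearIndependent_iff]
      intro g hg
      rw [Fin.sum_univ_succ] at hg
      simp only [hBfam, Fin.cons_zero, Fin.cons_succ] at hg
      have h2 : ∑ i : Fin n, g i.succ • b' i = 0 := by
        have h3 := congrArg (Submodule.Quotient.mk (p := L)) hg
        rw [Submodule.Quotient.mk_add, Submodule.Quotient.mk_smul, hmkx, smul_zero,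
          zero_add] at h3
        rw [show (Submodule.Quotient.mk (∑ i : Fin n, g i.succ • v i) : W ⧸ L)
            = ∑ i : Fin n, g i.succ • (Submodule.Quotient.mk (v i) : W ⧸ L) by
          rw [← Submodule.mkQ_apply, map_sum]
          simp [Submodule.mkQ_apply]] at h3
        rw [show (Submodule.Quotient.mk 0 : W ⧸ L) = 0 from rfl] at h3
        calc ∑ i : Fin n, g i.succ • b' i
            = ∑ i : Fin n, g i.succ • (Submodule.Quotient.mk (v i) : W ⧸ L) := by
              refine Finset.sum_congr rfl fun i _ => by rw [hmk i]
          _ = 0 := h3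
      have hg0 : ∀ i : Fin n, g i.succ = 0 :=
        Fintype.linearIndependent_iff.mp b'.linearIndependent _ h2
      have hgx : g 0 • x = 0 := by
        have : ∑ i : Fin n, g i.succ • v i = 0 := by
          refine Finset.sum_eq_zero fun i _ => by rw [hg0 i, zero_smul]
        rwa [this, add_zero] at hg
      have hg00 : g 0 = 0 := by
        rcases smul_eq_zero.mp hgx with h | h
        · exact h
        · exact absurd h hx0
      intro i
      refine Fin.cases hg00 (fun j => hg0 j) i
    have hcard : Fintype.card (Fin (n + 1)) = finrank k W := by simpa using hdim.symm
    refine ⟨basisOfLinearIndependentOfCardEqFinrank hli hcard, ?_⟩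
    intro i
    rw [coe_basisOfLinearIndependentOfCardEqFinrank]
    refine Fin.cases ?_ (fun j => ?_) i
    · simpa [hBfam] using hfx
    · simpa [hBfam] using hfv j

lemma li_trio {V : Type} [AddCommGroup V] [Module k V] (f : V →ₛₗ[frobenius k p] V)
    {x : V} (h2 : f (f x) ≠ 0) (h3 : f (f (f x)) = 0) :
    LinearIndependent k ![x, f x, f (f x)] := by
  have hppos : p ≠ 0 := (Fact.out : p.Prime).pos.ne'
  have hsm : ∀ (c : k) (v : V), f (c • v) = c ^ p • f v := fun c v => by
    rw [map_smulₛₗ]; rfl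
  refine li_triple fun a b c habc => ?_
  have h1 : a ^ p • f x + b ^ p • f (f x) = 0 := by
    have h := congrArg f habc
    rw [map_add, map_add, hsm, hsm, hsm, map_zero, h3, smul_zero, add_zero] at h
    exact h
  have h2' : (a ^ p) ^ p • f (f x) = 0 := by
    have h := congrArg f h1
    rw [map_add, hsm, hsm, map_zero, h3, smul_zero, add_zero] at h
    exact h
  have ha : a = 0 := by
    rcases smul_eq_zero.mp h2' with h | h
    · exact (pow_eq_zero_iff hppos).mp ((pow_eq_zero_iff hppos).mp h)
    · exact absurd h h2
  have hb : b = 0 := by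
    rw [ha, zero_pow hppos, zero_smul, zero_add] at h1
    rcases smul_eq_zero.mp h1 with h | h
    · exact (pow_eq_zero_iff hppos).mp h
    · exact absurd h h2
  have hc : c = 0 := by
    rw [ha, hb, zero_smul, zero_smul, zero_add, zero_add] at habc
    rcases smul_eq_zero.mp habc with h | h
    · exact h
    · exact absurd h h2
  exact ⟨ha, hb, hc⟩

end Helpers

/-- Let `V` be a `3`-dimensional vector space over `k` and `φ : V → V` an additive map with
`φ(c·v) = c^p·φ(v)` (Frobenius-semilinear). Then there is a basis `(x, y, z)` of `V` such
that `(φ(x), φ(y), φ(z))` is one of the seven triples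
`(y,z,0), (0,z,0), (0,0,0), (0,0,z), (y,0,z), (0,y,z), (x,y,z)`. -/
theorem frobenius_semilinear_dim_three_classification
    (p : ℕ) (hp : p.Prime) (k : Type) [Field k] [IsAlgClosed k] [CharP k p]
    (V : Type) [AddCommGroup V] [Module k V] [FiniteDimensional k V]
    (hdim : Module.finrank k V = 3)
    (φ : V →+ V) (hφ : ∀ (c : k) (v : V), φ (c • v) = c ^ p • φ v) :
    ∃ b : Basis (Fin 3) k V,
      (φ (b 0) = b 1 ∧ φ (b 1) = b 2 ∧ φ (b 2) = 0) ∨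
      (φ (b 0) = 0 ∧ φ (b 1) = b 2 ∧ φ (b 2) = 0) ∨
      (φ (b 0) = 0 ∧ φ (b 1) = 0 ∧ φ (b 2) = 0) ∨
      (φ (b 0) = 0 ∧ φ (b 1) = 0 ∧ φ (b 2) = b 2) ∨
      (φ (b 0) = b 1 ∧ φ (b 1) = 0 ∧ φ (b 2) = b 2) ∨
      (φ (b 0) = 0 ∧ φ (b 1) = b 1 ∧ φ (b 2) = b 2) ∨
      (φ (b 0) = b 0 ∧ φ (b 1) = b 1 ∧ φ (b 2) = b 2) := by
  haveI : Fact p.Prime := ⟨hp⟩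
  haveI : RingHomSurjective (frobenius k p) := ⟨(frobeniusEquiv k p).surjective⟩
  classical
  set f : V →ₛₗ[frobenius k p] V :=
    { toFun := φ, map_add' := φ.map_add,
      map_smul' := fun c v => by simpa [frobenius_def] using hφ c v } with hfdef
  have hfφ : ∀ v, φ v = f v := fun _ => rfl
  have hsm : ∀ (c : k) (v : V), f (c • v) = c ^ p • f v := fun c v => by
    rw [map_smulₛₗ]; rfl
  set K : ℕ → Submodule k V := fun n => Nat.rec ⊥ (fun _ Q => Q.comap f) n with hK
  set Rn : ℕ → Submodule k V := fun n => Nat.rec ⊤ (fun _ Q => Q.map f) n with hRn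
  have hK0 : K 0 = ⊥ := rfl
  have hKs : ∀ n, K (n + 1) = (K n).comap f := fun _ => rfl
  have hR0 : Rn 0 = ⊤ := rfl
  have hRs : ∀ n, Rn (n + 1) = (Rn n).map f := fun _ => rfl
  have hit3 : ∀ x : V, (⇑f)^[3] x = f (f (f x)) := fun _ => rfl
  have hmemK : ∀ n (x : V), x ∈ K n ↔ (⇑f)^[n] x = 0 := by
    intro n
    induction n with
    | zero => intro x; simp [hK0]
    | succ n ihn =>
      intro x
      rw [hKs, Submodule.mem_comap, ihn, ← Function.iterate_succ_apply]
  have hmemR : ∀ n (x : V), x ∈ Rn n ↔ ∃ u, (⇑f)^[n] u = x := by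
    intro n
    induction n with
    | zero => intro x; simp [hR0]
    | succ n ihn =>
      intro x
      rw [hRs, Submodule.mem_map]
      constructor
      · rintro ⟨y, hy, rfl⟩
        obtain ⟨u, rfl⟩ := (ihn y).mp hy
        exact ⟨u, Function.iterate_succ_apply' (⇑f) n u⟩
      · rintro ⟨u, rfl⟩
        exact ⟨(⇑f)^[n] u, (ihn _).mpr ⟨u, rfl⟩,
          (Function.iterate_succ_apply' (⇑f) n u).symm⟩
  have hKmono : ∀ n, K n ≤ K (n + 1) := by
    intro n
    induction n with
    | zero => rw [hK0]; exact bot_le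
    | succ n ihn => rw [hKs n, hKs (n + 1)]; exact Submodule.comap_mono ihn
  have hRmono : ∀ n, Rn (n + 1) ≤ Rn n := by
    intro n
    induction n with
    | zero => rw [hR0]; exact le_top
    | succ n ihn => rw [hRs n, hRs (n + 1)]; exact Submodule.map_mono ihn
  have hKstep : ∀ n, K n = K (n + 1) → K (n + 1) = K (n + 2) := fun n h => by
    rw [hKs n, hKs (n + 1), h]
  have hRstep : ∀ n, Rn n = Rn (n + 1) → Rn (n + 1) = Rn (n + 2) := fun n h => by
    rw [hRs n, hRs (n + 1), h]
  have hK34 : K 3 = K 4 := by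
    by_cases h2 : K 2 = K 3
    · exact hKstep 2 h2
    by_cases h1 : K 1 = K 2
    · exact absurd (hKstep 1 h1) h2
    by_cases h0 : K 0 = K 1
    · exact absurd (hKstep 0 h0) h1
    have d0 : finrank k (K 0) = 0 := by rw [hK0]; exact finrank_bot k V
    have l01 : finrank k (K 0) < finrank k (K 1) :=
      Submodule.finrank_lt_finrank_of_lt (lt_of_le_of_ne (hKmono 0) h0)
    have l12 : finrank k (K 1) < finrank k (K 2) :=
      Submodule.finrank_lt_finrank_of_lt (lt_of_le_of_ne (hKmono 1) h1)
    have l23 : finrank k (K 2) < finrank k (K 3) :=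
      Submodule.finrank_lt_finrank_of_lt (lt_of_le_of_ne (hKmono 2) h2)
    have hle : finrank k (K 3) ≤ 3 := hdim ▸ Submodule.finrank_le _
    have htop : K 3 = ⊤ := Submodule.eq_top_of_finrank_eq (by rw [hdim]; omega)
    exact le_antisymm (hKmono 3) (by rw [htop]; exact le_top)
  have hR34 : Rn 3 = Rn 4 := by
    by_cases h2 : Rn 2 = Rn 3
    · exact hRstep 2 h2
    by_cases h1 : Rn 1 = Rn 2
    · exact absurd (hRstep 1 h1) h2
    by_cases h0 : Rn 0 = Rn 1
    · exact absurd (hRstep 0 h0) h1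
    have d0 : finrank k (Rn 0) = 3 := by rw [hR0, finrank_top, hdim]
    have l01 : finrank k (Rn 1) < finrank k (Rn 0) :=
      Submodule.finrank_lt_finrank_of_lt (lt_of_le_of_ne (hRmono 0) (fun h => h0 h.symm))
    have l12 : finrank k (Rn 2) < finrank k (Rn 1) :=
      Submodule.finrank_lt_finrank_of_lt (lt_of_le_of_ne (hRmono 1) (fun h => h1 h.symm))
    have l23 : finrank k (Rn 3) < finrank k (Rn 2) :=
      Submodule.finrank_lt_finrank_of_lt (lt_of_le_of_ne (hRmono 2) (fun h => h2 h.symm))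
    have hbot : Rn 3 = ⊥ := Submodule.finrank_eq_zero.mp (by omega)
    have hbot4 : Rn 4 = ⊥ := by
      show Rn (3 + 1) = ⊥
      rw [hRs 3, hbot, Submodule.map_bot]
    rw [hbot, hbot4]
  have hK36 : K 3 = K 6 := by
    have h45 := hKstep 3 hK34
    have h56 := hKstep 4 h45
    exact hK34.trans (h45.trans h56)
  have hR36 : Rn 3 = Rn 6 := by
    have h45 := hRstep 3 hR34
    have h56 := hRstep 4 h45
    exact hR34.trans (h45.trans h56)
  set N3 := K 3 with hN3
  set S3 := Rn 3 with hS3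
  have hinf : N3 ⊓ S3 = ⊥ := by
    rw [eq_bot_iff]
    rintro v ⟨hvK, hvR⟩
    obtain ⟨u, hu⟩ := (hmemR 3 v).mp hvR
    have h6 : (⇑f)^[6] u = 0 := by
      have h3 : (⇑f)^[3] v = 0 := (hmemK 3 v).mp hvK
      rw [← hu, ← Function.iterate_add_apply] at h3
      exact h3
    have hu3 : (⇑f)^[3] u = 0 := (hmemK 3 u).mp (by
      show u ∈ N3
      rw [hK36]; exact (hmemK 6 u).mpr h6)
    simp only [Submodule.mem_bot]
    rw [← hu, hu3]
  have hsup : N3 ⊔ S3 = ⊤ := by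
    rw [eq_top_iff]
    intro v _
    have h1 : (⇑f)^[3] v ∈ Rn 6 := by rw [← hR36]; exact (hmemR 3 _).mpr ⟨v, rfl⟩
    obtain ⟨u, hu⟩ := (hmemR 6 _).mp h1
    have hsub : ∀ (a b : V), (⇑f)^[3] (a - b) = (⇑f)^[3] a - (⇑f)^[3] b := by
      intro a b
      show f (f (f (a - b))) = _
      rw [map_sub, map_sub, map_sub]
      rfl
    have h2 : v - (⇑f)^[3] u ∈ N3 := (hmemK 3 _).mpr (by
      rw [hsub, ← Function.iterate_add_apply, hu, sub_self])
    have h3 : (⇑f)^[3] u ∈ S3 := (hmemR 3 _).mpr ⟨u, rfl⟩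
    have h4 := Submodule.add_mem_sup h2 h3
    rwa [sub_add_cancel] at h4
  have hrank : finrank k N3 + finrank k S3 = 3 := by
    have h := Submodule.finrank_sup_add_finrank_inf_eq N3 S3
    rw [hsup, hinf, finrank_top, hdim, finrank_bot] at h
    omega
  have hNstab : ∀ v ∈ N3, f v ∈ N3 := by
    intro v hv
    have hv3 : (⇑f)^[3] v = 0 := (hmemK 3 v).mp hv
    refine (hmemK 3 (f v)).mpr ?_
    rw [← Function.iterate_succ_apply, Function.iterate_succ_apply', hv3, map_zero]
  have hnil3 : ∀ v ∈ N3, f (f (f v)) = 0 := fun v hv => by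
    rw [← hit3]
    exact (hmemK 3 v).mp hv
  have hmapS : S3.map f = S3 := by
    have h := (hRs 3).symm
    exact h.trans hR34.symm
  set fS : S3 →ₛₗ[frobenius k p] S3 :=
    LinearMap.codRestrict S3 (f.domRestrict S3)
      (fun c => hmapS.le (Submodule.mem_map_of_mem c.2)) with hfS
  have hfSapp : ∀ x : S3, (fS x : V) = f x := fun x => rfl
  have hfSinj : Function.Injective fS := by
    rw [injective_iff_map_eq_zero]
    intro y hy
    have h1 : f (y : V) = 0 := by
      have h := congrArg Subtype.val hy
      rwa [hfSapp] at h
    have h2 : (y : V) ∈ N3 := (hmemK 3 _).mpr (by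
      rw [hit3, h1, map_zero, map_zero])
    have h3 : (y : V) ∈ N3 ⊓ S3 := ⟨h2, y.2⟩
    rw [hinf] at h3
    exact Subtype.ext (by simpa using h3)
  have hfSsurj : Function.Surjective fS := by
    intro y
    have h1 : (y : V) ∈ S3.map f := by rw [hmapS]; exact y.2
    obtain ⟨w, hw, hfw⟩ := h1
    exact ⟨⟨w, hw⟩, Subtype.ext hfw⟩
  obtain ⟨bS, hbS⟩ := exists_fixed_basis (finrank k S3) S3 fS ⟨hfSinj, hfSsurj⟩ rfl
  set e : Fin (finrank k S3) → V := fun i => (bS i : V) with he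
  have heS : ∀ i, e i ∈ S3 := fun i => (bS i).2
  have hef : ∀ i, f (e i) = e i := by
    intro i
    have h := congrArg Subtype.val (hbS i)
    rwa [hfSapp] at h
  have heli : LinearIndependent k e :=
    bS.linearIndependent.map' S3.subtype (Submodule.ker_subtype S3)
  have hcases : finrank k N3 = 0 ∨ finrank k N3 = 1 ∨ finrank k N3 = 2 ∨
      finrank k N3 = 3 := by omega
  have hppne : p ≠ 0 := hp.pos.ne'
  have hcard : Fintype.card (Fin 3) = finrank k V := by rw [hdim]; simp
  rcases hcases with hm | hm | hm | hm
  · -- étale of dim 3 : case 7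
    have hs : finrank k S3 = 3 := by omega
    have e'li : LinearIndependent k (fun i : Fin 3 => e (Fin.cast hs.symm i)) :=
      heli.comp _ (Fin.cast_injective hs.symm)
    refine ⟨basisOfLinearIndependentOfCardEqFinrank e'li hcard,
      Or.inr (Or.inr (Or.inr (Or.inr (Or.inr (Or.inr ⟨?_, ?_, ?_⟩)))))⟩ <;>
      · simp only [coe_basisOfLinearIndependentOfCardEqFinrank]
        exact hef _
  · -- case 6
    have hs : finrank k S3 = 2 := by omega
    set e' : Fin 2 → V := fun i => e (Fin.cast hs.symm i) with he'
    have e'li : LinearIndependent k e' := heli.comp _ (Fin.cast_injective hs.symm)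
    have hNne : N3 ≠ ⊥ := by
      intro hh
      rw [hh] at hm
      simp at hm
    obtain ⟨u, huN, hu0⟩ := Submodule.exists_mem_ne_zero_of_ne_bot hNne
    have hspan : Submodule.span k {u} = N3 := by
      apply Submodule.eq_of_le_of_finrank_le
      · rw [Submodule.span_le]
        simpa using huN
      · rw [hm, finrank_span_singleton hu0]
    have hfu : f u = 0 := by
      have h1 : f u ∈ N3 := hNstab u huN
      rw [← hspan] at h1
      obtain ⟨c, hc⟩ := Submodule.mem_span_singleton.mp h1
      have e1 : f u = c • u := hc.symm
      have e2 : f (f u) = (c ^ p * c) • u := by rw [e1, hsm, e1, smul_smul]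
      have e3 : f (f (f u)) = ((c ^ p * c) ^ p * c) • u := by rw [e2, hsm, e1, smul_smul]
      have h4 : f (f (f u)) = 0 := hnil3 u huN
      rw [e3] at h4
      rcases smul_eq_zero.mp h4 with h | h
      · have hc0 : c = 0 := by
          by_contra hcne
          exact (mul_ne_zero (pow_ne_zero _ (mul_ne_zero (pow_ne_zero _ hcne) hcne)) hcne) h
        rw [e1, hc0, zero_smul]
      · exact absurd h hu0
    have hli : LinearIndependent k ![u, e' 0, e' 1] := by
      refine li_triple fun a b c habc => ?_
      have hsplit := zero_of_add_eq_zero_of_disjoint hinf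
        (Submodule.smul_mem N3 a huN)
        (Submodule.add_mem S3 (Submodule.smul_mem S3 b (heS _))
          (Submodule.smul_mem S3 c (heS _)))
        (by rw [← add_assoc]; exact habc)
      have ha : a = 0 := by
        rcases smul_eq_zero.mp hsplit.1 with h | h
        · exact h
        · exact absurd h hu0
      have hbc := Fintype.linearIndependent_iff.mp e'li ![b, c] (by
        rw [Fin.sum_univ_two]
        simpa using hsplit.2)
      exact ⟨ha, by simpa using hbc 0, by simpa using hbc 1⟩
    refine ⟨basisOfLinearIndependentOfCardEqFinrank hli hcard,
      Or.inr (Or.inr (Or.inr (Or.inr (Or.inr (Or.inl ⟨?_, ?_, ?_⟩)))))⟩ <;>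
      simp only [coe_basisOfLinearIndependentOfCardEqFinrank]
    · show φ (![u, e' 0, e' 1] 0) = 0
      exact hfu
    · show φ (![u, e' 0, e' 1] 1) = ![u, e' 0, e' 1] 1
      exact hef _
    · show φ (![u, e' 0, e' 1] 2) = ![u, e' 0, e' 1] 2
      exact hef _
  · -- nilpotent dim 2
    have hs : finrank k S3 = 1 := by omega
    set e' : Fin 1 → V := fun i => e (Fin.cast hs.symm i) with he'
    have he'S : e' 0 ∈ S3 := heS _
    have he'f : f (e' 0) = e' 0 := hef _
    have he'ne : e' 0 ≠ 0 := heli.ne_zero (Fin.cast hs.symm 0)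
    by_cases hfN : ∀ v ∈ N3, f v = 0
    · -- case 4
      set bN : Basis (Fin 2) k N3 := Module.finBasisOfFinrankEq k N3 hm with hbN
      have uli : LinearIndependent k (fun i : Fin 2 => (bN i : V)) :=
        bN.linearIndependent.map' N3.subtype (Submodule.ker_subtype N3)
      have hli : LinearIndependent k ![(bN 0 : V), (bN 1 : V), e' 0] := by
        refine li_triple fun a b c habc => ?_
        have hsplit := zero_of_add_eq_zero_of_disjoint hinf
          (Submodule.add_mem N3 (Submodule.smul_mem N3 a (bN 0).2)
            (Submodule.smul_mem N3 b (bN 1).2))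
          (Submodule.smul_mem S3 c he'S) habc
        have hab := Fintype.linearIndependent_iff.mp uli ![a, b] (by
          rw [Fin.sum_univ_two]
          simpa using hsplit.1)
        have hc : c = 0 := by
          rcases smul_eq_zero.mp hsplit.2 with h | h
          · exact h
          · exact absurd h he'ne
        exact ⟨by simpa using hab 0, by simpa using hab 1, hc⟩
      refine ⟨basisOfLinearIndependentOfCardEqFinrank hli hcard,
        Or.inr (Or.inr (Or.inr (Or.inl ⟨?_, ?_, ?_⟩)))⟩ <;>
        simp only [coe_basisOfLinearIndependentOfCardEqFinrank]
      · show φ (![(bN 0 : V), (bN 1 : V), e' 0] 0) = 0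
        exact hfN _ (bN 0).2
      · show φ (![(bN 0 : V), (bN 1 : V), e' 0] 1) = 0
        exact hfN _ (bN 1).2
      · show φ (![(bN 0 : V), (bN 1 : V), e' 0] 2) = ![(bN 0 : V), (bN 1 : V), e' 0] 2
        exact he'f
    · push_neg at hfN
      obtain ⟨x, hxN, hfx0⟩ := hfN
      have hfxN : f x ∈ N3 := hNstab x hxN
      have hffx : f (f x) = 0 := by
        by_contra hffne
        have htrio := li_trio f hffne (hnil3 x hxN)
        have hmemi : ∀ i : Fin 3, (![x, f x, f (f x)]) i ∈ N3 := by
          intro i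
          fin_cases i
          · simpa using hxN
          · simpa using hfxN
          · simpa using hNstab _ hfxN
        have htrioN : LinearIndependent k
            (fun i : Fin 3 => (⟨![x, f x, f (f x)] i, hmemi i⟩ : N3)) := by
          apply LinearIndependent.of_comp N3.subtype
          exact htrio
        have hcard3 := htrioN.fintype_card_le_finrank
        rw [hm] at hcard3
        simp at hcard3
      -- case 5
      have hli : LinearIndependent k ![x, f x, e' 0] := by
        refine li_triple fun a b c habc => ?_
        have hsplit := zero_of_add_eq_zero_of_disjoint hinf
          (Submodule.add_mem N3 (Submodule.smul_mem N3 a hxN)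
            (Submodule.smul_mem N3 b hfxN))
          (Submodule.smul_mem S3 c he'S) habc
        have hc : c = 0 := by
          rcases smul_eq_zero.mp hsplit.2 with h | h
          · exact h
          · exact absurd h he'ne
        have h2 := hsplit.1
        have h1 : a ^ p • f x = 0 := by
          have h := congrArg f h2
          rw [map_add, hsm, hsm, map_zero, hffx, smul_zero, add_zero] at h
          exact h
        have ha : a = 0 := by
          rcases smul_eq_zero.mp h1 with h | h
          · exact (pow_eq_zero_iff hppne).mp h
          · exact absurd h hfx0
        have hb : b = 0 := by
          rw [ha, zero_smul, zero_add] at h2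
          rcases smul_eq_zero.mp h2 with h | h
          · exact h
          · exact absurd h hfx0
        exact ⟨ha, hb, hc⟩
      refine ⟨basisOfLinearIndependentOfCardEqFinrank hli hcard,
        Or.inr (Or.inr (Or.inr (Or.inr (Or.inl ⟨?_, ?_, ?_⟩))))⟩ <;>
        simp only [coe_basisOfLinearIndependentOfCardEqFinrank]
      · show φ (![x, f x, e' 0] 0) = ![x, f x, e' 0] 1
        rfl
      · show φ (![x, f x, e' 0] 1) = 0
        exact hffx
      · show φ (![x, f x, e' 0] 2) = ![x, f x, e' 0] 2
        exact he'f
  · -- nilpotent dim 3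
    have htopN : N3 = ⊤ := Submodule.eq_top_of_finrank_eq (by rw [hm, hdim])
    have hnilV : ∀ v : V, f (f (f v)) = 0 := fun v => hnil3 v (by rw [htopN]; trivial)
    by_cases h1 : ∀ v : V, f v = 0
    · -- case 3
      refine ⟨Module.finBasisOfFinrankEq k V hdim, Or.inr (Or.inr (Or.inl ⟨?_, ?_, ?_⟩))⟩ <;>
        exact h1 _
    · push_neg at h1
      obtain ⟨x, hfx0⟩ := h1
      by_cases h2 : ∀ v : V, f (f v) = 0
      · -- case 2
        have hffx : f (f x) = 0 := h2 x
        have hzex : ∃ z : V, f z = 0 ∧ z ∉ Submodule.span k {f x} := by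
          by_contra hcon
          push_neg at hcon
          have hVle : (⊤ : Submodule k V) ≤ Submodule.span k ({x, f x} : Set V) := by
            intro v _
            have hv1 : f v ∈ Submodule.span k {f x} := hcon (f v) (h2 v)
            obtain ⟨c, hc⟩ := Submodule.mem_span_singleton.mp hv1
            have h3 : f ((frobeniusEquiv k p).symm c • x) = f v := by
              rw [hsm, show ((frobeniusEquiv k p).symm c) ^ p = c from
                frobenius_apply_frobeniusEquiv_symm k p c, hc]
            have h4 : f (v - (frobeniusEquiv k p).symm c • x) = 0 := by
              rw [map_sub, h3, sub_self]
            have h5 : v - (frobeniusEquiv k p).symm c • x ∈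
                Submodule.span k ({x, f x} : Set V) :=
              Submodule.span_mono (by simp) (hcon _ h4)
            have h6 : (frobeniusEquiv k p).symm c • x ∈
                Submodule.span k ({x, f x} : Set V) :=
              Submodule.smul_mem _ _ (Submodule.subset_span (by simp))
            have h7 := Submodule.add_mem _ h5 h6
            rwa [sub_add_cancel] at h7
          have h10 : finrank k (Submodule.span k ({x, f x} : Set V)) ≤ 2 := by
            refine le_trans (finrank_span_le_card _) ?_
            rw [Set.toFinset_insert, Set.toFinset_singleton]
            exact le_trans (Finset.card_insert_le _ _) (by simp)
          have h9 : (⊤ : Submodule k V) = Submodule.span k ({x, f x} : Set V) :=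
            le_antisymm hVle le_top
          have h11 : finrank k V ≤ 2 := by
            rw [← finrank_top k V, h9]
            exact h10
          omega
        obtain ⟨z, hfz, hznot⟩ := hzex
        have hli : LinearIndependent k ![z, x, f x] := by
          refine li_triple fun a b c habc => ?_
          have h3 : b ^ p • f x = 0 := by
            have h := congrArg f habc
            rw [map_add, map_add, hsm, hsm, hsm, map_zero, hfz, hffx, smul_zero, smul_zero,
              add_zero, zero_add] at h
            exact h
          have hb : b = 0 := by
            rcases smul_eq_zero.mp h3 with h | h
            · exact (pow_eq_zero_iff hppne).mp h
            · exact absurd h hfx0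
          have h4 : a • z + c • f x = 0 := by
            rw [hb, zero_smul, add_zero] at habc
            exact habc
          have ha : a = 0 := by
            by_contra hane
            have h6 : a • z = (-c) • f x := by
              rw [neg_smul]
              exact eq_neg_of_add_eq_zero_left h4
            have h5 : z = (a⁻¹ * (-c)) • f x := by
              calc z = a⁻¹ • (a • z) := by rw [smul_smul, inv_mul_cancel₀ hane, one_smul]
                _ = a⁻¹ • ((-c) • f x) := by rw [h6]
                _ = (a⁻¹ * (-c)) • f x := by rw [smul_smul]
            exact hznot (by
              rw [h5]
              exact Submodule.smul_mem _ _ (Submodule.mem_span_singleton_self (f x)))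
          have hc : c = 0 := by
            rw [ha, zero_smul, zero_add] at h4
            rcases smul_eq_zero.mp h4 with h | h
            · exact h
            · exact absurd h hfx0
          exact ⟨ha, hb, hc⟩
        refine ⟨basisOfLinearIndependentOfCardEqFinrank hli hcard,
          Or.inr (Or.inl ⟨?_, ?_, ?_⟩)⟩ <;>
          simp only [coe_basisOfLinearIndependentOfCardEqFinrank]
        · show φ (![z, x, f x] 0) = 0
          exact hfz
        · show φ (![z, x, f x] 1) = ![z, x, f x] 2
          rfl
        · show φ (![z, x, f x] 2) = 0
          exact hffx
      · push_neg at h2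
        obtain ⟨y, hffy⟩ := h2
        have hli := li_trio f hffy (hnilV y)
        refine ⟨basisOfLinearIndependentOfCardEqFinrank hli hcard,
          Or.inl ⟨?_, ?_, ?_⟩⟩ <;>
          simp only [coe_basisOfLinearIndependentOfCardEqFinrank]
        · show φ (![y, f y, f (f y)] 0) = ![y, f y, f (f y)] 1
          rfl
        · show φ (![y, f y, f (f y)] 1) = ![y, f y, f (f y)] 2
          rfl
        · show φ (![y, f y, f (f y)] 2) = 0
          exact hnilV y
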